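/- arXiv:0808.0146 — 2 statements merged into one kernel-verified Lean document; each statement's English description precedes it below -/
import Mathlib

section
/- Let α be an atom supported in a ball B of radius ≤ b in a locally doubling metric measure space with the AMP property, and let R₀/(1−β) < c < b. Then there exist N atoms a₁,…,a_N supported in balls of radius at most c and scalars λ₁,…,λ_N with |λⱼ| ≤ C such that a = Σⱼ λⱼaⱼ and ‖a‖_{H_c^{1,r}} ≤ C·N, where C and N depend only on M, b, c. -/
open MeasureTheory Metric Set ENNReal

variable {M : Type*} [MetricSpace M] [MeasurableSpace M]

/-- A `(1,r)`-atom at scale `b`: a function supported in a ball `B` of radius at most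
`b`, with vanishing integral and `‖a‖_{L^r} ≤ μ(B)^{1/r}·μ(B)⁻¹` (for `r = ∞` this is
`‖a‖_∞ ≤ μ(B)⁻¹`). -/
def IsAtomOn (μ : MeasureTheory.Measure M) (r : ℝ≥0∞) (b : ℝ) (a : M → ℝ) : Prop :=
  ∃ (x : M) (s : ℝ), 0 < s ∧ s ≤ b ∧
    (∀ y, y ∉ Metric.ball x s → a y = 0) ∧
    MeasureTheory.Integrable a μ ∧
    (∫ y, a y ∂μ) = 0 ∧
    MeasureTheory.eLpNorm a r μ ≤
      μ (Metric.ball x s) ^ ((1 / r).toReal) * (μ (Metric.ball x s))⁻¹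

/-- Membership in the atomic Hardy space `H_b^{1,r}(μ)`: `f = Σ λ_k a_k` with `(1,r)`-atoms
`a_k` supported in balls of radius ≤ `b`, `Σ|λ_k| < ∞`, the series converging in `L¹(μ)`. -/
def InHardy (μ : MeasureTheory.Measure M) (r : ℝ≥0∞) (b : ℝ) (f : M → ℝ) : Prop :=
  ∃ (c : ℕ → ℝ) (a : ℕ → M → ℝ),
    (∀ n, IsAtomOn μ r b (a n)) ∧ Summable (fun n => |c n|) ∧
    Filter.Tendsto
      (fun N => ∫ x, |f x - ∑ n ∈ Finset.range N, c n * a n x| ∂μ)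
      Filter.atTop (nhds 0)

/-- The atomic Hardy norm `‖f‖_{H_b^{1,r}(μ)}`: the infimum of `Σ|λ_k|` over all atomic
decompositions of `f`. -/
noncomputable def hardyNorm (μ : MeasureTheory.Measure M) (r : ℝ≥0∞) (b : ℝ)
    (f : M → ℝ) : ℝ :=
  sInf {t : ℝ | ∃ (c : ℕ → ℝ) (a : ℕ → M → ℝ),
    (∀ n, IsAtomOn μ r b (a n)) ∧ Summable (fun n => |c n|) ∧
    Filter.Tendsto
      (fun N => ∫ x, |f x - ∑ n ∈ Finset.range N, c n * a n x| ∂μ)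
      Filter.atTop (nhds 0) ∧
    (∑' n, |c n|) = t}

open scoped NNReal

/-!
If the ball `B(x₀, s)` supporting `a` has radius `s ≤ c`, then `a` is already an atom at scale `c`.
Otherwise cover `B(x₀, s)` by boundedly many balls `B(xⱼ, c)` (a maximal `c`-separated family,
whose size local doubling controls) and cut `a` along the disjointed cover into pieces `aⱼ` of mass
`mⱼ = ∫ aⱼ`. Let `u_w` be the normalized indicator of `B(w, ρ)`. Then `aⱼ - mⱼ u_{xⱼ}` is a bounded
multiple of an atom at scale `c`. The approximate midpoint property joins `xⱼ` to `x₀` by a chain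
of `2 ^ k` steps of length `≤ t`, where `t + ρ = c`, and every difference `u_w - u_{w'}` along the
chain is again a bounded multiple of an atom. Since `∑ mⱼ = ∫ a = 0`, summing
`(aⱼ - mⱼ u_{xⱼ}) + mⱼ (u_{xⱼ} - u_{x₀})` over `j` gives back `a`.
-/

noncomputable def atomBound {X : Type*} [MeasurableSpace X] (μ : Measure X) (r : ℝ≥0∞)
    (B : Set X) : ℝ≥0∞ :=
  μ B ^ (1 / r).toReal * (μ B)⁻¹

section AtomBound

variable {X : Type*} [MeasurableSpace X] {μ : Measure X} {r : ℝ≥0∞} {B B' : Set X}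

theorem atomBound_eq_inv_rpow (hB0 : μ B ≠ 0) (hB : μ B ≠ ⊤) :
    atomBound μ r B = (μ B)⁻¹ ^ (1 - (1 / r).toReal) := by
  rw [atomBound, ENNReal.inv_rpow, ← ENNReal.rpow_neg, ← ENNReal.rpow_neg_one,
    ← ENNReal.rpow_add _ _ hB0 hB]
  ring_nf

theorem toReal_one_div_le_one (hr : 1 ≤ r) : (1 / r).toReal ≤ 1 :=
  ENNReal.toReal_le_of_le_ofReal (by norm_num) (by simpa using ENNReal.inv_le_one.2 hr)

theorem atomBound_le_mul_atomBound (hr : 1 ≤ r) {T : ℝ≥0} (hT : 1 ≤ T)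
    (hB0 : μ B ≠ 0) (hB : μ B ≠ ⊤) (hB'0 : μ B' ≠ 0) (hB' : μ B' ≠ ⊤)
    (h : μ B' ≤ T * μ B) : atomBound μ r B ≤ T * atomBound μ r B' := by
  have hp : 0 ≤ 1 - (1 / r).toReal := sub_nonneg.2 (toReal_one_div_le_one hr)
  have hp1 : 1 - (1 / r).toReal ≤ 1 := by linarith [(1 / r).toReal_nonneg]
  have hinv : (μ B)⁻¹ ≤ T * (μ B')⁻¹ := by
    rw [← div_eq_mul_inv, ENNReal.le_div_iff_mul_le (Or.inl hB'0) (Or.inl hB'), mul_comm,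
      ← div_eq_mul_inv]
    exact ENNReal.div_le_of_le_mul h
  rw [atomBound_eq_inv_rpow hB0 hB, atomBound_eq_inv_rpow hB'0 hB']
  calc (μ B)⁻¹ ^ (1 - (1 / r).toReal)
      ≤ (T * (μ B')⁻¹) ^ (1 - (1 / r).toReal) := ENNReal.rpow_le_rpow hinv hp
    _ = (T : ℝ≥0∞) ^ (1 - (1 / r).toReal) * (μ B')⁻¹ ^ (1 - (1 / r).toReal) :=
      ENNReal.mul_rpow_of_nonneg _ _ hp
    _ ≤ T * (μ B')⁻¹ ^ (1 - (1 / r).toReal) := by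
      gcongr
      calc (T : ℝ≥0∞) ^ (1 - (1 / r).toReal) ≤ (T : ℝ≥0∞) ^ (1 : ℝ) :=
            ENNReal.rpow_le_rpow_of_exponent_le (by exact_mod_cast hT) hp1
        _ = T := ENNReal.rpow_one _

/-- Hölder's inequality on `B`. -/
theorem eLpNorm_one_le_one_of_le_atomBound (hr : 1 ≤ r) {a : X → ℝ}
    (ha : AEStronglyMeasurable a μ) (hsupp : a.support ⊆ B) (hB0 : μ B ≠ 0) (hB : μ B ≠ ⊤)
    (hnorm : eLpNorm a r μ ≤ atomBound μ r B) : eLpNorm a 1 μ ≤ 1 := by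
  rw [← eLpNorm_restrict_eq_of_support_subset hsupp]
  refine (eLpNorm_le_eLpNorm_mul_rpow_measure_univ hr ha.restrict).trans ?_
  have hexp : 1 / (1 : ℝ≥0∞).toReal - 1 / r.toReal = 1 - (1 / r).toReal := by
    rw [ENNReal.toReal_one, div_one, ENNReal.toReal_div, ENNReal.toReal_one]
  rw [eLpNorm_restrict_eq_of_support_subset hsupp, Measure.restrict_apply_univ, hexp]
  calc eLpNorm a r μ * μ B ^ (1 - (1 / r).toReal)
      ≤ atomBound μ r B * μ B ^ (1 - (1 / r).toReal) := by gcongr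
    _ = 1 := by
      rw [atomBound_eq_inv_rpow hB0 hB, ENNReal.inv_rpow, ENNReal.inv_mul_cancel]
      · exact (ENNReal.rpow_pos (pos_iff_ne_zero.2 hB0) hB).ne'
      · exact ENNReal.rpow_ne_top_of_nonneg (sub_nonneg.2 (toReal_one_div_le_one hr)) hB

theorem eLpNorm_sub_le_two_mul_atomBound (hr : 1 ≤ r) {T : ℝ≥0} (hT : 1 ≤ T) {f g : X → ℝ}
    (hf : AEStronglyMeasurable f μ) (hg : AEStronglyMeasurable g μ)
    {B₁ B₂ : Set X} (hB0 : μ B ≠ 0) (hB : μ B ≠ ⊤) (hB₁0 : μ B₁ ≠ 0) (hB₁ : μ B₁ ≠ ⊤)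
    (hB₂0 : μ B₂ ≠ 0) (hB₂ : μ B₂ ≠ ⊤) (hfB : eLpNorm f r μ ≤ atomBound μ r B₁)
    (hgB : eLpNorm g r μ ≤ atomBound μ r B₂) (h₁ : μ B ≤ T * μ B₁) (h₂ : μ B ≤ T * μ B₂) :
    eLpNorm (f - g) r μ ≤ ENNReal.ofReal (2 * T) * atomBound μ r B := by
  calc eLpNorm (f - g) r μ ≤ atomBound μ r B₁ + atomBound μ r B₂ :=
        (eLpNorm_sub_le hf hg hr).trans (add_le_add hfB hgB)
    _ ≤ T * atomBound μ r B + T * atomBound μ r B := add_le_add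
        (atomBound_le_mul_atomBound hr hT hB₁0 hB₁ hB0 hB h₁)
        (atomBound_le_mul_atomBound hr hT hB₂0 hB₂ hB0 hB h₂)
    _ = ENNReal.ofReal (2 * T) * atomBound μ r B := by
      rw [ENNReal.ofReal_mul zero_le_two, ENNReal.ofReal_coe_nnreal]
      norm_num
      ring

end AtomBound

section Doubling

variable (μ : Measure M)

theorem measure_ball_ne_zero_of_doubling (hpos : μ univ ≠ 0)
    (hLD : ∀ b : ℝ, 0 < b → ∃ D : ℝ, ∀ (x : M) (s : ℝ), 0 < s → s ≤ b →
      μ (ball x (2 * s)) ≤ ENNReal.ofReal D * μ (ball x s))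
    (x : M) (t : ℝ) (ht : 0 < t) : μ (ball x t) ≠ 0 := by
  intro h0
  have hzero : ∀ n : ℕ, μ (ball x (2 ^ n * t)) = 0 := by
    intro n
    induction n with
    | zero => simpa using h0
    | succ n ih =>
      obtain ⟨D, hD⟩ := hLD (2 ^ n * t) (by positivity)
      have h := hD x (2 ^ n * t) (by positivity) le_rfl
      rwa [ih, mul_zero, nonpos_iff_eq_zero, ← mul_assoc, ← pow_succ'] at h
  refine hpos (measure_mono_null (fun y _ => ?_) (measure_iUnion_null hzero))
  obtain ⟨n, hn⟩ := pow_unbounded_of_one_lt (dist y x / t) one_lt_two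
  exact mem_iUnion.2 ⟨n, mem_ball.2 ((div_lt_iff₀ ht).1 hn)⟩

theorem exists_measure_ball_le_mul_measure_ball
    (hLD : ∀ b : ℝ, 0 < b → ∃ D : ℝ, ∀ (x : M) (s : ℝ), 0 < s → s ≤ b →
      μ (ball x (2 * s)) ≤ ENNReal.ofReal D * μ (ball x s))
    {ρ : ℝ} (hρ : 0 < ρ) (R : ℝ) :
    ∃ T : ℝ≥0, 1 ≤ T ∧ ∀ x y : M, dist x y ≤ R → μ (ball x R) ≤ T * μ (ball y ρ) := by
  obtain ⟨k, hk⟩ := pow_unbounded_of_one_lt (2 * R / ρ) one_lt_two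
  obtain ⟨D, hD⟩ := hLD (2 ^ k * ρ) (by positivity)
  have hiter : ∀ y : M, ∀ i ≤ k,
      μ (ball y (2 ^ i * ρ)) ≤ ENNReal.ofReal D ^ i * μ (ball y ρ) := by
    intro y i
    induction i with
    | zero => simp
    | succ i ih =>
      intro hik
      calc μ (ball y (2 ^ (i + 1) * ρ)) = μ (ball y (2 * (2 ^ i * ρ))) := by ring_nf
        _ ≤ ENNReal.ofReal D * μ (ball y (2 ^ i * ρ)) :=
          hD y _ (by positivity) (by gcongr; exacts [one_le_two, by omega])
        _ ≤ ENNReal.ofReal D * (ENNReal.ofReal D ^ i * μ (ball y ρ)) := by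
          gcongr; exact ih (by omega)
        _ = ENNReal.ofReal D ^ (i + 1) * μ (ball y ρ) := by ring
  refine ⟨max 1 (D.toNNReal ^ k), le_max_left _ _, fun x y hxy => ?_⟩
  calc μ (ball x R) ≤ μ (ball y (2 ^ k * ρ)) := measure_mono fun z hz => by
        rw [mem_ball] at hz ⊢
        linarith [dist_triangle z x y, (div_lt_iff₀ hρ).1 hk]
    _ ≤ ENNReal.ofReal D ^ k * μ (ball y ρ) := hiter y k le_rfl
    _ ≤ ((max 1 (D.toNNReal ^ k) : ℝ≥0) : ℝ≥0∞) * μ (ball y ρ) := by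
      gcongr
      rw [ENNReal.ofReal, ← ENNReal.coe_pow, ENNReal.coe_le_coe]
      exact le_max_right _ _

end Doubling

section Chains

variable {X : Type*} [PseudoMetricSpace X]

def JoinedByChain (t : ℝ) (n : ℕ) (x y : X) : Prop :=
  ∃ w : ℕ → X, w 0 = x ∧ w n = y ∧ ∀ i < n, dist (w i) (w (i + 1)) ≤ t

theorem JoinedByChain.append {t : ℝ} {m n : ℕ} {x y z : X} (h₁ : JoinedByChain t m x z)
    (h₂ : JoinedByChain t n z y) : JoinedByChain t (m + n) x y := by
  obtain ⟨w₁, hw₁0, hw₁m, hw₁⟩ := h₁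
  obtain ⟨w₂, hw₂0, hw₂n, hw₂⟩ := h₂
  set w : ℕ → X := fun i => if i < m then w₁ i else w₂ (i - m)
  have hw_right : ∀ i, m ≤ i → w i = w₂ (i - m) := fun i hi => if_neg (not_lt.2 hi)
  refine ⟨w, ?_, ?_, fun i hi => ?_⟩
  · rcases Nat.eq_zero_or_pos m with rfl | hm
    · simp [w, hw₂0, hw₁0, ← hw₁m]
    · simp [w, hm, hw₁0]
  · rw [hw_right _ (by omega), Nat.add_sub_cancel_left, hw₂n]
  · rcases lt_or_ge i m with him | hmi
    · have h1 : w i = w₁ i := if_pos him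
      rcases lt_or_eq_of_le (Nat.succ_le_of_lt him) with h | h
      · rw [h1, show w (i + 1) = w₁ (i + 1) from if_pos h]
        exact hw₁ i him
      · rw [h1, hw_right _ h.ge, h, Nat.sub_self, hw₂0, ← hw₁m, ← h]
        exact hw₁ i him
    · rw [hw_right _ hmi, hw_right _ (by omega), show i + 1 - m = i - m + 1 by omega]
      exact hw₂ _ (by omega)

variable {R₀ β t : ℝ}

/-- Below the scale `R₀` the point `x` itself serves. -/
theorem exists_approx_midpoint (hβ : 0 < β) (hβ₁ : β ≤ 1) (ht : 0 ≤ t)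
    (hAMP : ∀ x y : X, R₀ < dist x y → ∃ (z : X) (s : ℝ),
      s < β * dist x y ∧ x ∈ ball z s ∧ y ∈ ball z s) (hR₀ : R₀ ≤ t)
    {k : ℕ} {x y : X} (hxy : dist x y ≤ t / β ^ (k + 1)) :
    ∃ z, dist x z ≤ t / β ^ k ∧ dist z y ≤ t / β ^ k := by
  by_cases hR : R₀ < dist x y
  · obtain ⟨z, s, hs, hxz, hyz⟩ := hAMP x y hR
    have hsk : s ≤ t / β ^ k := by
      have : β * (t / β ^ (k + 1)) = t / β ^ k := by
        field_simp
        ring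
      nlinarith
    rw [mem_ball] at hxz hyz
    exact ⟨z, by linarith, by rw [dist_comm]; linarith⟩
  · have htk : t ≤ t / β ^ k := le_div_self ht (by positivity) (pow_le_one₀ hβ.le hβ₁)
    exact ⟨x, by rw [dist_self]; linarith, by linarith⟩

theorem joinedByChain_of_dist_le (hβ : 0 < β) (hβ₁ : β ≤ 1) (ht : 0 ≤ t)
    (hAMP : ∀ x y : X, R₀ < dist x y → ∃ (z : X) (s : ℝ),
      s < β * dist x y ∧ x ∈ ball z s ∧ y ∈ ball z s) (hR₀ : R₀ ≤ t)
    (k : ℕ) {x y : X} (hxy : dist x y ≤ t / β ^ k) :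
    JoinedByChain t (2 ^ k) x y := by
  induction k generalizing x y with
  | zero =>
    refine ⟨fun i => if i = 0 then x else y, rfl, rfl, fun i hi => ?_⟩
    obtain rfl : i = 0 := by simpa using hi
    simpa using hxy
  | succ k ih =>
    obtain ⟨z, hxz, hzy⟩ := exists_approx_midpoint hβ hβ₁ ht hAMP hR₀ hxy
    rw [pow_succ, mul_two]
    exact (ih hxz).append (ih hzy)

end Chains

theorem exists_cover_of_separated_length_le {X : Type*} [PseudoMetricSpace X] [Nonempty X]
    {S : Set X} {δ : ℝ} {n : ℕ}
    (hbound : ∀ (m : ℕ) (x : ℕ → X), (∀ j < m, x j ∈ S) →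
      (∀ i < m, ∀ j < m, i ≠ j → δ ≤ dist (x i) (x j)) → m ≤ n) :
    ∃ (m : ℕ) (x : ℕ → X), m ≤ n ∧ (∀ j < m, x j ∈ S) ∧ S ⊆ ⋃ j < m, ball (x j) δ := by
  classical
  let P : ℕ → Prop := fun m => ∃ x : ℕ → X, (∀ j < m, x j ∈ S) ∧
    ∀ i < m, ∀ j < m, i ≠ j → δ ≤ dist (x i) (x j)
  have hP0 : P 0 := ⟨fun _ => Classical.arbitrary X, by simp, by simp⟩
  obtain ⟨x, hxS, hsep⟩ := Nat.findGreatest_spec (P := P) (Nat.zero_le n) hP0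
  set m := Nat.findGreatest P n
  refine ⟨m, x, Nat.findGreatest_le n, hxS, fun y hy => ?_⟩
  by_contra hcov
  simp only [mem_iUnion, mem_ball, not_exists, not_lt] at hcov
  -- a point of `S` outside all the balls would extend the sequence
  have hext : P (m + 1) := by
    refine ⟨fun j => if j < m then x j else y, fun j hj => ?_, fun i hi j hj hij => ?_⟩
    · rcases Nat.lt_succ_iff_lt_or_eq.1 hj with hj | rfl
      · simpa [hj] using hxS j hj
      · simpa using hy
    · rcases Nat.lt_succ_iff_lt_or_eq.1 hi with hi | rfl <;>
        rcases Nat.lt_succ_iff_lt_or_eq.1 hj with hj | rfl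
      · simpa [hi, hj] using hsep i hi j hj hij
      · simpa [hi, dist_comm] using hcov i hi
      · simpa [hj] using hcov j hj
      · exact absurd rfl hij
  obtain ⟨x', hx'S, hx'sep⟩ := hext
  exact Nat.findGreatest_is_greatest (Nat.lt_succ_self m) (hbound _ _ hx'S hx'sep)
    ⟨x', hx'S, hx'sep⟩

section Cover

variable [OpensMeasurableSpace M] (μ : Measure M) {x₀ : M} {s δ R : ℝ} {T : ℝ≥0}

/-- The disjoint balls `B(x j, δ / 2)` each carry at least `μ(B(x₀, R)) / T`. -/
theorem length_le_floor_of_separated (hR0 : μ (ball x₀ R) ≠ 0) (hR : μ (ball x₀ R) ≠ ⊤)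
    (hsR : s + δ / 2 ≤ R) (hT : ∀ y ∈ ball x₀ s, μ (ball x₀ R) ≤ T * μ (ball y (δ / 2)))
    {m : ℕ} {x : ℕ → M} (hx : ∀ j < m, x j ∈ ball x₀ s)
    (hsep : ∀ i < m, ∀ j < m, i ≠ j → δ ≤ dist (x i) (x j)) : m ≤ ⌊T⌋₊ := by
  have hdisj : ((Finset.range m : Set ℕ)).PairwiseDisjoint (fun j => ball (x j) (δ / 2)) :=
    fun i hi j hj hij => ball_disjoint_ball (by
      linarith [hsep i (by simpa using hi) j (by simpa using hj) hij])
  have hsub : (⋃ j ∈ Finset.range m, ball (x j) (δ / 2)) ⊆ ball x₀ R := by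
    simp only [iUnion_subset_iff, Finset.mem_range]
    intro j hj z hz
    rw [mem_ball] at hz ⊢
    linarith [dist_triangle z (x j) x₀, mem_ball.1 (hx j hj)]
  have hmul : (m : ℝ≥0∞) * μ (ball x₀ R) ≤ T * μ (ball x₀ R) := calc
    (m : ℝ≥0∞) * μ (ball x₀ R) = ∑ j ∈ Finset.range m, μ (ball x₀ R) := by simp
    _ ≤ ∑ j ∈ Finset.range m, T * μ (ball (x j) (δ / 2)) :=
      Finset.sum_le_sum fun j hj => hT _ (hx j (Finset.mem_range.1 hj))
    _ = T * μ (⋃ j ∈ Finset.range m, ball (x j) (δ / 2)) := by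
      rw [measure_biUnion_finset hdisj (fun _ _ => measurableSet_ball), Finset.mul_sum]
    _ ≤ T * μ (ball x₀ R) := by gcongr
  have hmT : (m : ℝ≥0∞) ≤ T := (ENNReal.mul_le_mul_iff_left hR0 hR).1 hmul
  exact Nat.le_floor (by exact_mod_cast hmT)

theorem exists_ball_cover (hR0 : μ (ball x₀ R) ≠ 0) (hR : μ (ball x₀ R) ≠ ⊤)
    (hsR : s + δ / 2 ≤ R) (hT : ∀ y ∈ ball x₀ s, μ (ball x₀ R) ≤ T * μ (ball y (δ / 2))) :
    ∃ (m : ℕ) (x : ℕ → M), m ≤ ⌊T⌋₊ ∧ (∀ j < m, x j ∈ ball x₀ s) ∧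
      ball x₀ s ⊆ ⋃ j < m, ball (x j) δ :=
  haveI : Nonempty M := ⟨x₀⟩
  exists_cover_of_separated_length_le fun _ _ hx hsep =>
    length_le_floor_of_separated μ hR0 hR hsR hT hx hsep

end Cover

section AtomicSum

variable {μ : Measure M} {r : ℝ≥0∞} {c C : ℝ}

def HasAtomicSum (μ : Measure M) (r : ℝ≥0∞) (c C : ℝ) (N : ℕ) (f : M → ℝ) : Prop :=
  ∃ (lam : ℕ → ℝ) (a : ℕ → M → ℝ), (∀ j < N, IsAtomOn μ r c (a j)) ∧ (∀ j < N, |lam j| ≤ C) ∧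
    f = ∑ j ∈ Finset.range N, lam j • a j

theorem isAtomOn_zero (x : M) (hc : 0 < c) : IsAtomOn μ r c 0 :=
  ⟨x, c, hc, le_rfl, fun _ _ => rfl, integrable_zero _ _ _, integral_zero _ _, by simp⟩

theorem isAtomOn_inv_smul {f : M → ℝ} {x : M} {s : ℝ} (hC : 0 < C) (hs : 0 < s) (hsc : s ≤ c)
    (hsupp : f.support ⊆ ball x s) (hf : Integrable f μ) (hf0 : ∫ y, f y ∂μ = 0)
    (hnorm : eLpNorm f r μ ≤ ENNReal.ofReal C * atomBound μ r (ball x s)) :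
    IsAtomOn μ r c (C⁻¹ • f) := by
  refine ⟨x, s, hs, hsc, fun y hy => ?_, hf.smul _, ?_, ?_⟩
  · simp [Function.notMem_support.1 fun h => hy (hsupp h)]
  · simp [integral_const_mul, hf0]
  · rw [eLpNorm_const_smul, Real.enorm_eq_ofReal_abs, abs_inv, abs_of_pos hC,
      ENNReal.ofReal_inv_of_pos hC]
    calc (ENNReal.ofReal C)⁻¹ * eLpNorm f r μ
        ≤ (ENNReal.ofReal C)⁻¹ * (ENNReal.ofReal C * atomBound μ r (ball x s)) := by gcongr
      _ = atomBound μ r (ball x s) := by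
        rw [← mul_assoc, ENNReal.inv_mul_cancel (by simpa using hC) ENNReal.ofReal_ne_top,
          one_mul]

namespace HasAtomicSum

theorem of_isAtomOn_inv_smul {f : M → ℝ} (hC : 0 < C) (h : IsAtomOn μ r c (C⁻¹ • f)) :
    HasAtomicSum μ r c C 1 f :=
  ⟨fun _ => C, fun _ => C⁻¹ • f, fun _ _ => h, fun _ _ => (abs_of_pos hC).le,
    by simp [smul_smul, hC.ne']⟩

theorem of_isAtomOn {f : M → ℝ} (h : IsAtomOn μ r c f) : HasAtomicSum μ r c 1 1 f :=
  of_isAtomOn_inv_smul one_pos (by simpa using h)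

theorem add {m n : ℕ} {f g : M → ℝ} (hf : HasAtomicSum μ r c C m f)
    (hg : HasAtomicSum μ r c C n g) : HasAtomicSum μ r c C (m + n) (f + g) := by
  obtain ⟨l₁, a₁, ha₁, hl₁, rfl⟩ := hf
  obtain ⟨l₂, a₂, ha₂, hl₂, rfl⟩ := hg
  refine ⟨fun j => if j < m then l₁ j else l₂ (j - m),
    fun j => if j < m then a₁ j else a₂ (j - m), fun j hj => ?_, fun j hj => ?_, ?_⟩
  · dsimp only
    split_ifs with h
    exacts [ha₁ j h, ha₂ _ (by omega)]
  · dsimp only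
    split_ifs with h
    exacts [hl₁ j h, hl₂ _ (by omega)]
  · rw [Finset.sum_range_add]
    congr 1
    · exact Finset.sum_congr rfl fun j hj => by simp [Finset.mem_range.1 hj]
    · exact Finset.sum_congr rfl fun j _ => by simp

theorem mono {m n : ℕ} {C' : ℝ} {f : M → ℝ} (h : HasAtomicSum μ r c C m f)
    (hz : IsAtomOn μ r c 0) (hC' : 0 ≤ C') (hCC' : C ≤ C') (hmn : m ≤ n) :
    HasAtomicSum μ r c C' n f := by
  obtain ⟨lam, a, ha, hlam, rfl⟩ := h
  have hzero : HasAtomicSum μ r c C' (n - m) 0 :=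
    ⟨0, 0, fun _ _ => hz, fun _ _ => by simpa using hC', by simp⟩
  simpa [Nat.add_sub_cancel' hmn] using
    (show HasAtomicSum μ r c C' m _ from
      ⟨lam, a, ha, fun j hj => (hlam j hj).trans hCC', rfl⟩).add hzero

theorem smul {n : ℕ} {f : M → ℝ} (h : HasAtomicSum μ r c C n f) {k : ℝ} (hk : |k| ≤ 1) :
    HasAtomicSum μ r c C n (k • f) := by
  obtain ⟨lam, a, ha, hlam, rfl⟩ := h
  refine ⟨fun j => k * lam j, a, ha, fun j hj => ?_, by simp [Finset.smul_sum, smul_smul]⟩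
  rw [abs_mul]
  exact (mul_le_of_le_one_left (abs_nonneg _) hk).trans (hlam j hj)

theorem sum {m n : ℕ} {f : ℕ → M → ℝ} (h : ∀ i < m, HasAtomicSum μ r c C n (f i)) :
    HasAtomicSum μ r c C (m * n) (∑ i ∈ Finset.range m, f i) := by
  induction m with
  | zero => exact ⟨0, 0, by simp, by simp, by simp⟩
  | succ m ih =>
    rw [Finset.sum_range_succ, Nat.succ_mul]
    exact (ih fun i hi => h i (by omega)).add (h m (by omega))

end HasAtomicSum

theorem hardyNorm_le_of_hasAtomicSum {N : ℕ} {f : M → ℝ} (hz : IsAtomOn μ r c 0)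
    (h : HasAtomicSum μ r c C N f) : hardyNorm μ r c f ≤ C * N := by
  classical
  obtain ⟨lam, a, ha, hlam, rfl⟩ := h
  set lam' : ℕ → ℝ := fun n => if n < N then lam n else 0
  set a' : ℕ → M → ℝ := fun n => if n < N then a n else 0
  have hlam' : ∀ n ∉ Finset.range N, |lam' n| = 0 := fun n hn => by
    simp [lam', Finset.mem_range.not.1 hn]
  have hpartial : ∀ K, N ≤ K → ∀ x, ∑ n ∈ Finset.range K, lam' n * a' n x =
      (∑ j ∈ Finset.range N, lam j • a j) x := fun K hK x => by
    rw [← Finset.sum_subset (Finset.range_subset_range.2 hK) fun n _ hn => by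
      simp [lam', Finset.mem_range.not.1 hn]]
    rw [Finset.sum_apply]
    exact Finset.sum_congr rfl fun n hn => by simp [lam', a', Finset.mem_range.1 hn]
  have hatoms : ∀ n, IsAtomOn μ r c (a' n) := fun n => by
    by_cases hn : n < N
    · simpa [a', hn] using ha n hn
    · simpa [a', hn] using hz
  have htsum : ∑' n, |lam' n| = ∑ j ∈ Finset.range N, |lam j| := by
    rw [tsum_eq_sum hlam']
    exact Finset.sum_congr rfl fun n hn => by simp [lam', Finset.mem_range.1 hn]
  calc hardyNorm μ r c (∑ j ∈ Finset.range N, lam j • a j) ≤ ∑ j ∈ Finset.range N, |lam j| :=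
        csInf_le ⟨0, fun t ⟨_, _, _, _, _, ht⟩ => ht ▸ tsum_nonneg fun _ => abs_nonneg _⟩
          ⟨lam', a', hatoms, summable_of_ne_finset_zero hlam',
            tendsto_atTop_of_eventually_const (i₀ := N) fun K hK => by simp [hpartial K hK],
            htsum⟩
    _ ≤ ∑ _j ∈ Finset.range N, C := Finset.sum_le_sum fun j hj => hlam j (Finset.mem_range.1 hj)
    _ = C * N := by simp [mul_comm]

end AtomicSum

theorem sum_indicator_disjointed_eq {X E : Type*} [AddCommMonoid E] {B : ℕ → Set X} {f : X → E}
    {m : ℕ} (hf : f.support ⊆ ⋃ j < m, B j) :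
    ∑ j ∈ Finset.range m, (disjointed B j).indicator f = f := by
  have hunion : ⋃ j ∈ Finset.range m, disjointed B j = ⋃ j < m, B j := by
    cases m with
    | zero => simp
    | succ m =>
      rw [biUnion_range_succ_disjointed, partialSups_eq_biUnion_range]
      simp only [Finset.mem_range]
  ext y
  rw [Finset.sum_apply, ← Finset.indicator_biUnion_apply _ _
    ((disjoint_disjointed B).set_pairwise _), hunion, indicator_eq_self.2 hf]

theorem abs_setIntegral_le_one {X : Type*} [MeasurableSpace X] {μ : Measure X} {a : X → ℝ}
    (ha : eLpNorm a 1 μ ≤ 1) (D : Set X) : |∫ x in D, a x ∂μ| ≤ 1 := by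
  have h : ‖∫ x in D, a x ∂μ‖ₑ ≤ 1 := by
    refine (enorm_integral_le_lintegral_enorm _).trans ?_
    rw [← eLpNorm_one_eq_lintegral_enorm]
    exact (eLpNorm_restrict_le _ _ _ _).trans ha
  rwa [Real.enorm_eq_ofReal_abs, ENNReal.ofReal_le_one] at h

noncomputable def normalizedBallIndicator (μ : Measure M) (ρ : ℝ) (x : M) : M → ℝ :=
  (ball x ρ).indicator fun _ => (μ (ball x ρ)).toReal⁻¹

section NormalizedBallIndicator

variable {μ : Measure M} {ρ : ℝ} {x : M}

theorem support_normalizedBallIndicator_subset :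
    (normalizedBallIndicator μ ρ x).support ⊆ ball x ρ :=
  support_indicator_subset

theorem eLpNorm_normalizedBallIndicator_le (r : ℝ≥0∞) (h0 : μ (ball x ρ) ≠ 0)
    (h : μ (ball x ρ) ≠ ⊤) :
    eLpNorm (normalizedBallIndicator μ ρ x) r μ ≤ atomBound μ r (ball x ρ) := by
  refine (eLpNorm_indicator_const_le _ _).trans (le_of_eq ?_)
  rw [atomBound, Real.enorm_eq_ofReal_abs, abs_inv, abs_of_pos (ENNReal.toReal_pos h0 h),
    ENNReal.ofReal_inv_of_pos (ENNReal.toReal_pos h0 h), ENNReal.ofReal_toReal h,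
    ENNReal.toReal_div, ENNReal.toReal_one, mul_comm]

variable [OpensMeasurableSpace M]

theorem integrable_normalizedBallIndicator (h : μ (ball x ρ) ≠ ⊤) :
    Integrable (normalizedBallIndicator μ ρ x) μ :=
  (integrable_indicator_iff measurableSet_ball).2 (integrableOn_const h)

theorem integral_normalizedBallIndicator (h0 : μ (ball x ρ) ≠ 0) (h : μ (ball x ρ) ≠ ⊤) :
    ∫ y, normalizedBallIndicator μ ρ x y ∂μ = 1 := by
  rw [normalizedBallIndicator, integral_indicator_const _ measurableSet_ball, smul_eq_mul,
    measureReal_def, mul_inv_cancel₀ (ENNReal.toReal_ne_zero.2 ⟨h0, h⟩)]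

end NormalizedBallIndicator

section Decomposition

variable [OpensMeasurableSpace M] {μ : Measure M} {r : ℝ≥0∞} {T : ℝ≥0} {ρ R c t : ℝ}

local notation "u" => normalizedBallIndicator μ ρ

theorem hasAtomicSum_normalizedBallIndicator_sub (hr : 1 ≤ r)
    (hμ0 : ∀ (x : M) (s : ℝ), 0 < s → μ (ball x s) ≠ 0) (hμ : ∀ (x : M) (s : ℝ), μ (ball x s) ≠ ⊤)
    (hT1 : 1 ≤ T) (hT : ∀ x y : M, dist x y ≤ R → μ (ball x R) ≤ T * μ (ball y ρ))
    (hρ : 0 < ρ) (htc : t + ρ ≤ c) (hcR : c ≤ R) (htR : t ≤ R) {w w' : M} (hw : dist w w' ≤ t) :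
    HasAtomicSum μ r c (2 * T) 1 (u w - u w') := by
  have ht : 0 ≤ t := dist_nonneg.trans hw
  have hc : 0 < c := by linarith
  have hint : ∀ v, Integrable (u v) μ := fun v => integrable_normalizedBallIndicator (hμ _ _)
  refine .of_isAtomOn_inv_smul (by positivity) (isAtomOn_inv_smul (x := w) (by positivity) hc
    le_rfl ((Function.support_sub _ _).trans (union_subset ?_ ?_)) ((hint w).sub (hint w')) ?_ ?_)
  · exact support_normalizedBallIndicator_subset.trans (ball_subset_ball (by linarith))
  · refine support_normalizedBallIndicator_subset.trans (ball_subset_ball' ?_)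
    linarith [dist_comm w w']
  · rw [Pi.sub_def, integral_sub (hint w) (hint w'),
      integral_normalizedBallIndicator (hμ0 _ _ hρ) (hμ _ _),
      integral_normalizedBallIndicator (hμ0 _ _ hρ) (hμ _ _), sub_self]
  · refine eLpNorm_sub_le_two_mul_atomBound hr hT1 (hint w).1 (hint w').1 (hμ0 _ _ hc) (hμ _ _)
      (hμ0 _ _ hρ) (hμ _ _) (hμ0 _ _ hρ) (hμ _ _)
      (eLpNorm_normalizedBallIndicator_le r (hμ0 _ _ hρ) (hμ _ _))
      (eLpNorm_normalizedBallIndicator_le r (hμ0 _ _ hρ) (hμ _ _)) ?_ ?_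
    · exact (measure_mono (ball_subset_ball hcR)).trans (hT w w (by simpa using hc.le.trans hcR))
    · exact (measure_mono (ball_subset_ball hcR)).trans (hT w w' (hw.trans htR))

theorem hasAtomicSum_normalizedBallIndicator_sub_of_chain (hr : 1 ≤ r)
    (hμ0 : ∀ (x : M) (s : ℝ), 0 < s → μ (ball x s) ≠ 0) (hμ : ∀ (x : M) (s : ℝ), μ (ball x s) ≠ ⊤)
    (hT1 : 1 ≤ T) (hT : ∀ x y : M, dist x y ≤ R → μ (ball x R) ≤ T * μ (ball y ρ))
    (hρ : 0 < ρ) (htc : t + ρ ≤ c) (hcR : c ≤ R) (htR : t ≤ R) {n : ℕ} {x y : M}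
    (hxy : JoinedByChain t n x y) : HasAtomicSum μ r c (2 * T) n (u x - u y) := by
  obtain ⟨w, rfl, rfl, hw⟩ := hxy
  have h := HasAtomicSum.sum (n := 1) fun i hi =>
    hasAtomicSum_normalizedBallIndicator_sub hr hμ0 hμ hT1 hT hρ htc hcR htR (hw i hi)
  rwa [Nat.mul_one, Finset.sum_range_sub' (fun i => u (w i))] at h

theorem hasAtomicSum_indicator_sub_smul (hr : 1 ≤ r)
    (hμ0 : ∀ (x : M) (s : ℝ), 0 < s → μ (ball x s) ≠ 0) (hμ : ∀ (x : M) (s : ℝ), μ (ball x s) ≠ ⊤)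
    (hT1 : 1 ≤ T) (hT : ∀ x y : M, dist x y ≤ R → μ (ball x R) ≤ T * μ (ball y ρ))
    (hρ : 0 < ρ) (hρc : ρ ≤ c) (hcR : c ≤ R) {a : M → ℝ} {x₀ y : M} {s : ℝ} (hs : 0 < s)
    (ha : Integrable a μ) (hnorm : eLpNorm a r μ ≤ atomBound μ r (ball x₀ s))
    (hys : μ (ball y c) ≤ T * μ (ball x₀ s)) {D : Set M} (hD : MeasurableSet D)
    (hDy : D ⊆ ball y c) (hm : |∫ x in D, a x ∂μ| ≤ 1) :
    HasAtomicSum μ r c (2 * T) 1 (D.indicator a - (∫ x in D, a x ∂μ) • u y) := by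
  set m := ∫ x in D, a x ∂μ
  have hc : 0 < c := hρ.trans_le hρc
  have hu : Integrable (u y) μ := integrable_normalizedBallIndicator (hμ _ _)
  refine .of_isAtomOn_inv_smul (by positivity) (isAtomOn_inv_smul (x := y) (by positivity) hc
    le_rfl ((Function.support_sub _ _).trans (union_subset ?_ ?_)) ((ha.indicator hD).sub
    (hu.smul m)) ?_ ?_)
  · exact support_indicator_subset.trans hDy
  · exact (Function.support_const_smul_subset _ _).trans
      (support_normalizedBallIndicator_subset.trans (ball_subset_ball hρc))
  · rw [Pi.sub_def, integral_sub (ha.indicator hD) (hu.smul m), integral_indicator hD]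
    simp [integral_const_mul, integral_normalizedBallIndicator (hμ0 _ _ hρ) (hμ _ _), m]
  · refine eLpNorm_sub_le_two_mul_atomBound hr hT1 (ha.1.indicator hD) (hu.1.const_smul m)
      (hμ0 _ _ hc) (hμ _ _) (hμ0 _ _ hs) (hμ _ _) (hμ0 _ _ hρ) (hμ _ _)
      ((eLpNorm_indicator_le a).trans hnorm) ?_ hys
      ((measure_mono (ball_subset_ball hcR)).trans (hT y y (by simpa using hc.le.trans hcR)))
    rw [eLpNorm_const_smul]
    calc ‖m‖ₑ * eLpNorm (u y) r μ ≤ 1 * atomBound μ r (ball y ρ) := by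
          gcongr
          · rwa [Real.enorm_eq_ofReal_abs, ENNReal.ofReal_le_one]
          · exact eLpNorm_normalizedBallIndicator_le r (hμ0 _ _ hρ) (hμ _ _)
      _ = atomBound μ r (ball y ρ) := one_mul _

theorem hasAtomicSum_of_cover (hr : 1 ≤ r)
    (hμ0 : ∀ (x : M) (s : ℝ), 0 < s → μ (ball x s) ≠ 0) (hμ : ∀ (x : M) (s : ℝ), μ (ball x s) ≠ ⊤)
    (hT1 : 1 ≤ T) (hT : ∀ x y : M, dist x y ≤ R → μ (ball x R) ≤ T * μ (ball y ρ))
    (hρ : 0 < ρ) (ht : 0 ≤ t) (htc : t + ρ ≤ c) (hcR : c ≤ R) (htR : t ≤ R)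
    {a : M → ℝ} {x₀ : M} {s : ℝ} (hs : 0 < s) (hρs : ρ ≤ s) (hsR : s + c ≤ R)
    (hsupp : ∀ y, y ∉ ball x₀ s → a y = 0) (ha : Integrable a μ) (ha0 : ∫ y, a y ∂μ = 0)
    (hnorm : eLpNorm a r μ ≤ atomBound μ r (ball x₀ s)) {m L : ℕ} {x : ℕ → M}
    (hx : ∀ j < m, x j ∈ ball x₀ s) (hcover : ball x₀ s ⊆ ⋃ j < m, ball (x j) c)
    (hchain : ∀ j < m, JoinedByChain t L (x j) x₀) :
    HasAtomicSum μ r c (2 * T) (m * (1 + L)) a := by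
  set D := disjointed fun j => ball (x j) c
  have hD : ∀ j, MeasurableSet (D j) := MeasurableSet.disjointed fun _ => measurableSet_ball
  have hsupp' : a.support ⊆ ball x₀ s := fun y hy => by_contra fun h => hy (hsupp y h)
  have hpart : ∑ j ∈ Finset.range m, (D j).indicator a = a :=
    sum_indicator_disjointed_eq (hsupp'.trans hcover)
  have hmass : ∑ j ∈ Finset.range m, ∫ y in D j, a y ∂μ = 0 := by
    simp_rw [← integral_indicator (hD _)]
    rw [← integral_finsetSum _ fun j _ => ha.indicator (hD j), ← ha0]
    congr 1 with y
    rw [← Finset.sum_apply, hpart]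
  have hL1 := eLpNorm_one_le_one_of_le_atomBound hr ha.1 hsupp' (hμ0 _ _ hs) (hμ _ _) hnorm
  have hdecomp : a = ∑ j ∈ Finset.range m, ((D j).indicator a - (∫ y in D j, a y ∂μ) • u x₀) := by
    rw [Finset.sum_sub_distrib, ← Finset.sum_smul, hmass, zero_smul, sub_zero, hpart]
  rw [hdecomp]
  refine HasAtomicSum.sum fun j hj => ?_
  have hys : μ (ball (x j) c) ≤ T * μ (ball x₀ s) := calc
    μ (ball (x j) c) ≤ μ (ball x₀ R) :=
      measure_mono (ball_subset_ball' (by linarith [mem_ball.1 (hx j hj)]))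
    _ ≤ T * μ (ball x₀ ρ) := hT x₀ x₀ (by simpa using hs.le.trans (by linarith))
    _ ≤ T * μ (ball x₀ s) := by gcongr
  have hcell := (hasAtomicSum_indicator_sub_smul hr hμ0 hμ hT1 hT hρ (by linarith) hcR hs ha
    hnorm hys (hD j) (disjointed_subset _ _) (abs_setIntegral_le_one hL1 _)).add
    ((hasAtomicSum_normalizedBallIndicator_sub_of_chain hr hμ0 hμ hT1 hT hρ htc hcR htR
      (hchain j hj)).smul (abs_setIntegral_le_one hL1 (D j)))
  convert hcell using 1
  rw [smul_sub]
  abel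

end Decomposition

theorem exists_hasAtomicSum [OpensMeasurableSpace M] (μ : Measure M) (hpos : μ univ ≠ 0)
    (hballs : ∀ (x : M) (r : ℝ), μ (ball x r) < ⊤)
    (hLD : ∀ b : ℝ, 0 < b → ∃ D : ℝ, ∀ (x : M) (s : ℝ), 0 < s → s ≤ b →
      μ (ball x (2 * s)) ≤ ENNReal.ofReal D * μ (ball x s))
    {R₀ β : ℝ} (hR₀ : 0 ≤ R₀) (hβ : 0 < β) (hβ₁ : β < 1)
    (hAMP : ∀ x y : M, R₀ < dist x y → ∃ (z : M) (s : ℝ),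
      s < β * dist x y ∧ x ∈ ball z s ∧ y ∈ ball z s)
    {r : ℝ≥0∞} (hr : 1 ≤ r) {b c : ℝ} (hR₀c : R₀ < c) (hcb : c < b) :
    ∃ (C : ℝ) (N : ℕ), 0 < C ∧ ∀ a : M → ℝ, IsAtomOn μ r b a → HasAtomicSum μ r c C N a := by
  have hc : 0 < c := hR₀.trans_lt hR₀c
  have hb : 0 < b := hc.trans hcb
  -- chain steps of length `t ≥ R₀` and normalized indicators of radius `ρ`, with `t + ρ = c`
  obtain ⟨t, ρ, hR₀t, hρ, htρ, hρc⟩ : ∃ t ρ : ℝ, R₀ ≤ t ∧ 0 < ρ ∧ t + ρ = c ∧ ρ ≤ c / 2 :=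
    ⟨(R₀ + c) / 2, (c - R₀) / 2, by linarith, by linarith, by ring, by linarith⟩
  have ht : 0 < t := by linarith
  obtain ⟨T, hT1, hT⟩ := exists_measure_ball_le_mul_measure_ball μ hLD hρ (b + 2 * c)
  obtain ⟨k, hk⟩ := exists_pow_lt_of_lt_one (div_pos ht hb) hβ₁
  have hbk : b ≤ t / β ^ k := by
    rw [lt_div_iff₀ hb] at hk
    rw [le_div_iff₀ (by positivity)]
    linarith
  have hμ0 := measure_ball_ne_zero_of_doubling μ hpos hLD
  have hμtop : ∀ (x : M) (s : ℝ), μ (ball x s) ≠ ⊤ := fun x s => (hballs x s).ne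
  have hT2 : (1 : ℝ) ≤ 2 * T := by linarith [show (1 : ℝ) ≤ T from hT1]
  have hTfloor : 1 ≤ ⌊T⌋₊ := Nat.le_floor (by simpa using hT1)
  refine ⟨2 * T, ⌊T⌋₊ * (1 + 2 ^ k), by positivity, ?_⟩
  rintro a ⟨x₀, s, hs, hsb, hsupp, ha, ha0, hnorm⟩
  have hz : IsAtomOn μ r c 0 := isAtomOn_zero x₀ hc
  rcases le_or_gt s c with hsc | hcs
  · exact (HasAtomicSum.of_isAtomOn ⟨x₀, s, hs, hsc, hsupp, ha, ha0, hnorm⟩).mono hz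
      (by positivity) hT2 (Nat.one_le_iff_ne_zero.2 (Nat.mul_ne_zero (by omega) (by positivity)))
  obtain ⟨m, x, hm, hx, hcover⟩ := exists_ball_cover μ (x₀ := x₀) (s := s) (δ := c)
    (R := b + 2 * c) (hμ0 x₀ _ (by positivity)) (hμtop _ _) (by linarith) fun y hy =>
      (hT x₀ y (by linarith [mem_ball'.1 hy])).trans (by gcongr)
  have hchain : ∀ j < m, JoinedByChain t (2 ^ k) (x j) x₀ := fun j hj =>
    joinedByChain_of_dist_le hβ hβ₁.le ht.le hAMP (by linarith) k
      ((mem_ball.1 (hx j hj)).le.trans (hsb.trans hbk))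
  exact (hasAtomicSum_of_cover hr hμ0 hμtop hT1 hT hρ ht.le (by linarith) (by linarith)
    (by linarith) hs (by linarith) (by linarith) hsupp ha ha0 hnorm hx hcover hchain).mono hz
    (by positivity) le_rfl (Nat.mul_le_mul_right _ hm)

theorem atom_decomposition_small_scale_general
    {M : Type*} [MetricSpace M] [MeasurableSpace M] [BorelSpace M]
    (μ : Measure M)
    (hpos : μ Set.univ ≠ 0)
    (hballs : ∀ (x : M) (r : ℝ), μ (Metric.ball x r) < ⊤)
    (hLD : ∀ b : ℝ, 0 < b → ∃ D : ℝ, ∀ (x : M) (s : ℝ), 0 < s → s ≤ b →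
      μ (Metric.ball x (2 * s)) ≤ ENNReal.ofReal D * μ (Metric.ball x s))
    (R₀ β : ℝ) (hR₀ : 0 ≤ R₀) (hβ₁ : 1 / 2 < β) (hβ₂ : β < 1)
    (hAMP : ∀ x y : M, R₀ < dist x y → ∃ (z : M) (s : ℝ),
      s < β * dist x y ∧ x ∈ Metric.ball z s ∧ y ∈ Metric.ball z s)
    (r : ℝ≥0∞) (hr : 1 < r)
    (b c : ℝ) (hc : R₀ / (1 - β) < c) (hcb : c < b) :
    ∃ (C : ℝ) (N : ℕ), 0 < C ∧
      ∀ a : M → ℝ, IsAtomOn μ r b a →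
        ∃ (lam : ℕ → ℝ) (at' : ℕ → M → ℝ),
          (∀ j, j < N → IsAtomOn μ r c (at' j)) ∧
          (∀ j, j < N → |lam j| ≤ C) ∧
          (∀ x, a x = ∑ j ∈ Finset.range N, lam j * at' j x) ∧
          hardyNorm μ r c a ≤ C * N := by
  have hR₀c : R₀ < c := (le_div_self hR₀ (by linarith) (by linarith)).trans_lt hc
  obtain ⟨C, N, hC, hdecomp⟩ := exists_hasAtomicSum μ hpos hballs hLD hR₀ (by linarith) hβ₂ hAMP
    hr.le hR₀c hcb
  refine ⟨C, N, hC, fun a ha => ?_⟩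
  obtain ⟨lam, at', hat, hlam, hsum⟩ := hdecomp a ha
  obtain ⟨x, -⟩ := ha
  refine ⟨lam, at', hat, hlam, fun y => by simp [hsum, Finset.sum_apply], ?_⟩
  exact hardyNorm_le_of_hasAtomicSum (isAtomOn_zero x (hR₀.trans_lt hR₀c))
    ⟨lam, at', hat, hlam, hsum⟩

/-- (Atom decomposition at smaller scales.)  In an unbounded, locally
doubling metric measure space with the approximate midpoint property, given
`R₀/(1−β) < c < b` there exist `C > 0` and `N ∈ ℕ` (depending only on `M, b, c`)
such that every `(1,r)`-atom `a` supported in a ball of radius `≤ b` can be written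
`a = Σ_{j<N} λⱼ aⱼ` with `(1,r)`-atoms `aⱼ` supported in balls of radius `≤ c`,
`|λⱼ| ≤ C`, and `‖a‖_{H_c^{1,r}} ≤ C·N`. -/
theorem atom_decomposition_small_scale
    {M : Type*} [MetricSpace M] [MeasurableSpace M] [BorelSpace M]
    (μ : Measure M)
    (hpos : μ Set.univ ≠ 0)
    (hballs : ∀ (x : M) (r : ℝ), μ (Metric.ball x r) < ⊤)
    (hunb : ¬ Bornology.IsBounded (Set.univ : Set M))
    (hLD : ∀ b : ℝ, 0 < b → ∃ D : ℝ, ∀ (x : M) (s : ℝ), 0 < s → s ≤ b →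
      μ (Metric.ball x (2 * s)) ≤ ENNReal.ofReal D * μ (Metric.ball x s))
    (R₀ β : ℝ) (hR₀ : 0 ≤ R₀) (hβ₁ : 1 / 2 < β) (hβ₂ : β < 1)
    (hAMP : ∀ x y : M, R₀ < dist x y → ∃ (z : M) (s : ℝ),
      s < β * dist x y ∧ x ∈ Metric.ball z s ∧ y ∈ Metric.ball z s)
    (r : ℝ≥0∞) (hr : 1 < r)
    (b c : ℝ) (hc : R₀ / (1 - β) < c) (hcb : c < b) :
    ∃ (C : ℝ) (N : ℕ), 0 < C ∧
      ∀ a : M → ℝ, IsAtomOn μ r b a →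
        ∃ (lam : ℕ → ℝ) (at' : ℕ → M → ℝ),
          (∀ j, j < N → IsAtomOn μ r c (at' j)) ∧
          (∀ j, j < N → |lam j| ≤ C) ∧
          (∀ x, a x = ∑ j ∈ Finset.range N, lam j * at' j x) ∧
          hardyNorm μ r c a ≤ C * N :=
  atom_decomposition_small_scale_general μ hpos hballs hLD R₀ β hR₀ hβ₁ hβ₂ hAMP r hr b c hc hcb
end

section
/- Let f ∈ BMO^{r'}(μ) with r ∈ (1,∞) and 1/r + 1/r' = 1. Then the functional ℓ(g) = ∫ f·g dμ, initially defined on finite linear combinations of (1,r)-atoms, extends to a bounded linear functional on H^{1,r}(μ) with operator norm at most ‖f‖_{BMO^{r'}(μ)}. In particular, for any (1,r)-atom a, |∫ f·a dμ| ≤ ‖f‖_{BMO^{r'}(μ)}. -/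
open MeasureTheory Metric Set ENNReal

variable {M : Type*} [MetricSpace M] [MeasurableSpace M]

/-- `K` bounds the mean `q`-oscillation of `f` over all balls of radius `≤ b`. -/
def OscBound (μ : MeasureTheory.Measure M) (q b : ℝ) (f : M → ℝ) (K : ℝ) : Prop :=
  ∀ (x : M) (s : ℝ), 0 < s → s ≤ b →
    (∫⁻ y in Metric.ball x s,
        ENNReal.ofReal (|f y - ⨍ z in Metric.ball x s, f z ∂μ| ^ q) ∂μ)
      ≤ ENNReal.ofReal (K ^ q) * μ (Metric.ball x s)

/-- Membership in `BMO_b^q(μ)`. -/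
def MemBMO (μ : MeasureTheory.Measure M) (q b : ℝ) (f : M → ℝ) : Prop :=
  MeasureTheory.LocallyIntegrable f μ ∧ ∃ K : ℝ, 0 ≤ K ∧ OscBound μ q b f K

/-- The `BMO_b^q(μ)` norm `N_b^q(f)`. -/
noncomputable def bmoNorm (μ : MeasureTheory.Measure M) (q b : ℝ) (f : M → ℝ) : ℝ :=
  sInf {K : ℝ | 0 ≤ K ∧ OscBound μ q b f K}

/-!
If `a` is an atom supported in a ball `B`, its vanishing mean gives `∫ f a = ∫ (f - f_B) a`, and
Hölder's inequality together with the size condition on `a` bounds this by the mean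
`r'`-oscillation of `f` over `B`.

For a finite combination `g` of atoms and an atomic decomposition `g = ∑ c_k a_k` converging in
`L¹`, the pairing with the unbounded `f` cannot be passed through the series directly. One pairs
instead with the truncations of `f` at height `m`: they are bounded, so the series can be passed
through; truncation is `1`-Lipschitz, so their oscillation on each ball is no larger than that of
`f`; and they converge to `f` by dominated convergence, since `f g` is integrable. This gives
`|∫ f g| ≤ K ∑ |c_k|` for every admissible `K` and every decomposition; take infima.
-/

open Filter Topology

noncomputable def clamp (m t : ℝ) : ℝ := max (min t m) (-m)

lemma continuous_clamp (m : ℝ) : Continuous (clamp m) :=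
  (continuous_id.min continuous_const).max continuous_const

lemma abs_clamp_le {m : ℝ} (hm : 0 ≤ m) (t : ℝ) : |clamp m t| ≤ m :=
  abs_le.2 ⟨le_max_right _ _, max_le (min_le_right _ _) (by linarith)⟩

lemma clamp_of_abs_le {m t : ℝ} (h : |t| ≤ m) : clamp m t = t := by
  rw [abs_le] at h
  rw [clamp, min_eq_left h.2, max_eq_left h.1]

lemma clamp_zero {m : ℝ} (hm : 0 ≤ m) : clamp m 0 = 0 :=
  clamp_of_abs_le (by simpa using hm)

lemma abs_clamp_sub_clamp_le (m s t : ℝ) : |clamp m s - clamp m t| ≤ |s - t| :=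
  (abs_max_sub_max_le_abs _ _ _).trans <| (abs_min_sub_min_le_max s m t m).trans (by simp)

lemma abs_clamp_le_abs {m : ℝ} (hm : 0 ≤ m) (t : ℝ) : |clamp m t| ≤ |t| := by
  simpa [clamp_zero hm] using abs_clamp_sub_clamp_le m t 0

lemma abs_indicator_clamp_le {α : Type*} {m : ℝ} (hm : 0 ≤ m) (U : Set α) (f : α → ℝ) (y : α) :
    |U.indicator (fun z => clamp m (f z)) y| ≤ m := by
  by_cases hy : y ∈ U
  · rw [indicator_of_mem hy]
    exact abs_clamp_le hm _
  · simpa [indicator_of_notMem hy] using hm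

lemma abs_indicator_clamp_sub_clamp_le {α : Type*} {m v : ℝ} (hm : 0 ≤ m) {U : Set α}
    {f : α → ℝ} {y : α} (hy : y ∈ U ∨ v = 0) :
    |U.indicator (fun z => clamp m (f z)) y - clamp m v| ≤ |f y - v| := by
  by_cases hyU : y ∈ U
  · rw [indicator_of_mem hyU]
    exact abs_clamp_sub_clamp_le _ _ _
  · rw [indicator_of_notMem hyU, hy.resolve_left hyU, clamp_zero hm, sub_zero]
    simp

lemma le_mul_csInf {a s : ℝ} {T : Set ℝ} (hs : 0 ≤ s) (hT : T.Nonempty)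
    (h : ∀ t ∈ T, a ≤ s * t) : a ≤ s * sInf T := by
  have := hT.to_subtype
  rw [sInf_eq_iInf', Real.mul_iInf_of_nonneg hs]
  exact le_ciInf fun t => h t t.2

lemma le_csInf_mul_csInf {a : ℝ} {S T : Set ℝ} (hS : S.Nonempty) (hT : T.Nonempty)
    (hS0 : ∀ s ∈ S, 0 ≤ s) (hT0 : 0 ≤ sInf T) (h : ∀ s ∈ S, ∀ t ∈ T, a ≤ s * t) :
    a ≤ sInf S * sInf T := by
  rw [mul_comm]
  refine le_mul_csInf hT0 hS fun s hs => ?_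
  rw [mul_comm]
  exact le_mul_csInf (hS0 s hs) hT (h s hs)

section MeasureSpace

variable {α : Type*} [MeasurableSpace α] {μ : Measure α}

lemma exists_measurableSet_aestronglyMeasurable_restrict_of_mul {u v : α → ℝ}
    (huv : AEStronglyMeasurable (fun x => u x * v x) μ) (hv : AEStronglyMeasurable v μ) :
    ∃ W : Set α, MeasurableSet W ∧ (∀ᵐ x ∂μ, v x ≠ 0 → x ∈ W) ∧
      AEStronglyMeasurable u (μ.restrict W) := by
  have hW := measurableSet_support hv.stronglyMeasurable_mk.measurable
  refine ⟨_, hW, ?_, ?_⟩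
  · filter_upwards [hv.ae_eq_mk] with x hx hvx
    rwa [Function.mem_support, ← hx]
  · refine (huv.stronglyMeasurable_mk.measurable.div
      hv.stronglyMeasurable_mk.measurable).aestronglyMeasurable.congr ?_
    filter_upwards [ae_restrict_of_ae hv.ae_eq_mk, ae_restrict_of_ae huv.ae_eq_mk,
      ae_restrict_mem hW] with x hvx huvx hx
    rw [Function.mem_support, ← hvx] at hx
    rw [Pi.div_apply, ← hvx, ← huvx, mul_div_cancel_right₀ _ hx]

lemma exists_superset_aestronglyMeasurable_restrict {f : α → ℝ} {W : Set α}
    (hW : MeasurableSet W) (hfW : AEStronglyMeasurable f (μ.restrict W)) {ι : Type*} [Countable ι]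
    {B : ι → Set α} (hB : ∀ k, MeasurableSet (B k)) :
    ∃ U, MeasurableSet U ∧ W ⊆ U ∧ AEStronglyMeasurable f (μ.restrict U) ∧
      ∀ k, B k ⊆ U ∨ ⨍ z in B k, f z ∂μ = 0 := by
  refine ⟨W ∪ ⋃ k : {k // IntegrableOn f (B k) μ}, B k,
    hW.union (.iUnion fun k => hB k), subset_union_left, ?_, fun k => ?_⟩
  · rw [aestronglyMeasurable_union_iff, aestronglyMeasurable_iUnion_iff]
    exact ⟨hfW, fun k => k.2.aestronglyMeasurable⟩
  by_cases hk : IntegrableOn f (B k) μ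
  · exact .inl <| subset_union_of_subset_right
      (subset_iUnion (fun k : {k // IntegrableOn f (B k) μ} => B k) ⟨k, hk⟩) _
  · exact .inr (by rw [setAverage_eq, integral_undef hk, smul_zero])

lemma tendsto_integral_clamp_mul {f g : α → ℝ} (hfg : Integrable (fun x => f x * g x) μ)
    (hmeas : ∀ m : ℕ, AEStronglyMeasurable (fun x => clamp m (f x) * g x) μ) :
    Tendsto (fun m : ℕ => ∫ x, clamp m (f x) * g x ∂μ) atTop (𝓝 (∫ x, f x * g x ∂μ)) := by
  refine tendsto_integral_of_dominated_convergence _ hmeas hfg.abs (fun m => .of_forall fun x => ?_)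
    (.of_forall fun x => tendsto_atTop_of_eventually_const (i₀ := ⌈|f x|⌉₊) fun m hm => ?_)
  · rw [Real.norm_eq_abs, abs_mul, abs_mul]
    exact mul_le_mul_of_nonneg_right (abs_clamp_le_abs m.cast_nonneg _) (abs_nonneg _)
  · rw [clamp_of_abs_le ((Nat.le_ceil _).trans (Nat.cast_le.2 hm))]

lemma tendsto_integral_mul_of_tendsto_integral_abs_sub {h g : α → ℝ} {G : ℕ → α → ℝ} {m : ℝ}
    (hh : AEStronglyMeasurable h μ) (hbdd : ∀ x, ‖h x‖ ≤ m) (hg : Integrable g μ)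
    (hG : ∀ N, Integrable (G N) μ)
    (hlim : Tendsto (fun N => ∫ x, |g x - G N x| ∂μ) atTop (𝓝 0)) :
    Tendsto (fun N => ∫ x, h x * G N x ∂μ) atTop (𝓝 (∫ x, h x * g x ∂μ)) := by
  have hhg := hg.bdd_mul hh (.of_forall hbdd)
  refine tendsto_iff_dist_tendsto_zero.2 <| squeeze_zero (fun _ => dist_nonneg) (fun N => ?_)
    (by simpa using hlim.const_mul m)
  have hhG := (hG N).bdd_mul hh (.of_forall hbdd)
  rw [Real.dist_eq, ← integral_sub hhG hhg, ← integral_const_mul]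
  refine (abs_integral_le_integral_abs).trans <|
    integral_mono (hhG.sub hhg).abs ((hg.sub (hG N)).abs.const_mul m) fun x => ?_
  rw [← mul_sub, abs_mul, abs_sub_comm, ← Real.norm_eq_abs (h x)]
  exact mul_le_mul_of_nonneg_right (hbdd x) (abs_nonneg _)

lemma abs_integral_mul_le_tsum {h g : α → ℝ} {c : ℕ → ℝ} {A : ℕ → α → ℝ} {m K : ℝ}
    (hh : AEStronglyMeasurable h μ) (hbdd : ∀ x, ‖h x‖ ≤ m) (hg : Integrable g μ)
    (hA : ∀ k, Integrable (A k) μ) (hc : Summable fun k => |c k|)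
    (hlim : Tendsto (fun N => ∫ x, |g x - ∑ k ∈ Finset.range N, c k * A k x| ∂μ) atTop (𝓝 0))
    (hK : ∀ k, |∫ x, h x * A k x ∂μ| ≤ K) :
    |∫ x, h x * g x ∂μ| ≤ K * ∑' k, |c k| := by
  have hK0 : 0 ≤ K := (abs_nonneg _).trans (hK 0)
  refine le_of_tendsto (tendsto_integral_mul_of_tendsto_integral_abs_sub hh hbdd hg
    (fun N => integrable_finsetSum _ fun k _ => (hA k).const_mul _) hlim).abs
    (.of_forall fun N => ?_)
  have hint : ∀ k, Integrable (fun x => c k * (h x * A k x)) μ :=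
    fun k => ((hA k).bdd_mul hh (.of_forall hbdd)).const_mul _
  calc |∫ x, h x * ∑ k ∈ Finset.range N, c k * A k x ∂μ|
      = |∑ k ∈ Finset.range N, c k * ∫ x, h x * A k x ∂μ| := by
        simp_rw [Finset.mul_sum, mul_left_comm (h _)]
        rw [integral_finsetSum _ fun k _ => hint k]
        simp_rw [integral_const_mul]
    _ ≤ ∑ k ∈ Finset.range N, |c k| * K := by
        refine (Finset.abs_sum_le_sum_abs _ _).trans (Finset.sum_le_sum fun k _ => ?_)
        rw [abs_mul]
        exact mul_le_mul_of_nonneg_left (hK k) (abs_nonneg _)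
    _ ≤ K * ∑' k, |c k| := by
        rw [← Finset.sum_mul, mul_comm]
        exact mul_le_mul_of_nonneg_left
          (hc.sum_le_tsum _ fun k _ => abs_nonneg _) hK0

lemma rpow_mul_rpow_mul_inv_le_one {p q : ℝ} (hpq : p.HolderConjugate q) (x : ℝ≥0∞) :
    x ^ (1 / p) * (x ^ (1 / q) * x⁻¹) ≤ 1 := by
  rcases eq_or_ne x 0 with rfl | h0
  · rw [ENNReal.zero_rpow_of_pos (one_div_pos.2 hpq.pos), zero_mul]
    exact zero_le_one
  rcases eq_or_ne x ⊤ with rfl | htop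
  · simp
  rw [← mul_assoc, ← ENNReal.rpow_add _ _ h0 htop, one_div, one_div, hpq.inv_add_inv_eq_one,
    ENNReal.rpow_one, ENNReal.mul_inv_cancel h0 htop]

lemma lintegral_enorm_mul_le_of_oscillation {q r K : ℝ} (hqr : q.HolderConjugate r)
    (hK : 0 ≤ K) {F φ a : α → ℝ} {B : Set α} (hsupp : ∀ y ∉ B, a y = 0)
    (ha : AEStronglyMeasurable a μ)
    (hnorm : eLpNorm a (ENNReal.ofReal r) μ ≤ μ B ^ (1 / ENNReal.ofReal r).toReal * (μ B)⁻¹)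
    (hFa : AEStronglyMeasurable (fun y => F y * a y) μ)
    (hFφ : ∀ᵐ y ∂μ, a y ≠ 0 → |F y| ≤ |φ y|)
    (hφ : ∫⁻ y in B, ENNReal.ofReal (|φ y| ^ q) ∂μ ≤ ENNReal.ofReal (K ^ q) * μ B) :
    ∫⁻ y, ‖F y * a y‖ₑ ∂μ ≤ ENNReal.ofReal K := by
  have hq := hqr.pos
  have hr := hqr.symm.pos
  -- `F` need not be measurable; `G` is a measurable substitute for `‖F‖ₑ` on the support of `a`.
  set G : α → ℝ≥0∞ := fun y => ‖F y * a y‖ₑ / ‖a y‖ₑ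
  have hG : AEMeasurable G (μ.restrict B) := (hFa.enorm.div ha.enorm).restrict
  have hFa_eq : ∀ y, ‖F y * a y‖ₑ = G y * ‖a y‖ₑ := by
    intro y
    rcases eq_or_ne (a y) 0 with h | h
    · simp [G, h]
    · exact (ENNReal.div_mul_cancel (enorm_ne_zero.2 h) enorm_ne_top).symm
  have hG_le : ∀ᵐ y ∂μ, G y ^ q ≤ ENNReal.ofReal (|φ y| ^ q) := by
    filter_upwards [hFφ] with y hy
    rcases eq_or_ne (a y) 0 with h | h
    · simp [G, h, ENNReal.zero_rpow_of_pos hq]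
    · rw [← ENNReal.ofReal_rpow_of_nonneg (abs_nonneg _) hq.le]
      gcongr
      simp only [G, enorm_mul, ENNReal.mul_div_cancel_right (enorm_ne_zero.2 h) enorm_ne_top]
      rw [Real.enorm_eq_ofReal_abs]
      exact ENNReal.ofReal_le_ofReal (hy h)
  have ha_r : (∫⁻ y in B, ‖a y‖ₑ ^ r ∂μ) ^ (1 / r) ≤ μ B ^ (1 / r) * (μ B)⁻¹ := by
    calc (∫⁻ y in B, ‖a y‖ₑ ^ r ∂μ) ^ (1 / r) ≤ (∫⁻ y, ‖a y‖ₑ ^ r ∂μ) ^ (1 / r) := by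
          gcongr
          exact Measure.restrict_le_self
      _ = eLpNorm a (ENNReal.ofReal r) μ := by
          rw [eLpNorm_eq_lintegral_rpow_enorm_toReal (by simpa using hr) (by simp),
            ENNReal.toReal_ofReal hr.le]
      _ ≤ μ B ^ (1 / ENNReal.ofReal r).toReal * (μ B)⁻¹ := hnorm
      _ = μ B ^ (1 / r) * (μ B)⁻¹ := by
          rw [one_div, ENNReal.toReal_inv, ENNReal.toReal_ofReal hr.le, one_div]
  calc ∫⁻ y, ‖F y * a y‖ₑ ∂μ = ∫⁻ y in B, G y * ‖a y‖ₑ ∂μ := by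
        rw [setLIntegral_eq_of_support_subset]
        · exact lintegral_congr hFa_eq
        · exact Function.support_subset_iff'.2 fun y hy => by simp [hsupp y hy]
    _ ≤ (∫⁻ y in B, G y ^ q ∂μ) ^ (1 / q) * (∫⁻ y in B, ‖a y‖ₑ ^ r ∂μ) ^ (1 / r) :=
        ENNReal.lintegral_mul_le_Lp_mul_Lq _ hqr hG ha.enorm.restrict
    _ ≤ (ENNReal.ofReal (K ^ q) * μ B) ^ (1 / q) * (μ B ^ (1 / r) * (μ B)⁻¹) := by
        gcongr
        exact (lintegral_mono_ae (ae_restrict_of_ae hG_le)).trans hφ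
    _ = ENNReal.ofReal K * (μ B ^ (1 / q) * (μ B ^ (1 / r) * (μ B)⁻¹)) := by
        rw [ENNReal.mul_rpow_of_nonneg _ _ (by positivity),
          ← ENNReal.ofReal_rpow_of_nonneg hK hq.le, ← ENNReal.rpow_mul,
          mul_one_div_cancel hq.ne', ENNReal.rpow_one, mul_assoc]
    _ ≤ ENNReal.ofReal K := mul_le_of_le_one_right' (rpow_mul_rpow_mul_inv_le_one hqr _)

lemma abs_integral_mul_le_of_oscillation {q r K c : ℝ} (hqr : q.HolderConjugate r)
    (hK : 0 ≤ K) {F φ a : α → ℝ} {B : Set α} (hsupp : ∀ y ∉ B, a y = 0)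
    (ha : Integrable a μ) (ha0 : ∫ y, a y ∂μ = 0)
    (hnorm : eLpNorm a (ENNReal.ofReal r) μ ≤ μ B ^ (1 / ENNReal.ofReal r).toReal * (μ B)⁻¹)
    (hFa : Integrable (fun y => F y * a y) μ)
    (hFφ : ∀ᵐ y ∂μ, a y ≠ 0 → |F y - c| ≤ |φ y|)
    (hφ : ∫⁻ y in B, ENNReal.ofReal (|φ y| ^ q) ∂μ ≤ ENNReal.ofReal (K ^ q) * μ B) :
    |∫ y, F y * a y ∂μ| ≤ K := by
  have hsub : (fun y => (F y - c) * a y) = fun y => F y * a y - c * a y := by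
    ext y
    ring
  have hcancel : ∫ y, F y * a y ∂μ = ∫ y, (F y - c) * a y ∂μ := by
    rw [hsub, integral_sub hFa (ha.const_mul c), integral_const_mul, ha0, mul_zero, sub_zero]
  rw [hcancel, ← ENNReal.ofReal_le_ofReal_iff hK, ← Real.enorm_eq_ofReal_abs]
  refine (enorm_integral_le_lintegral_enorm _).trans ?_
  refine lintegral_enorm_mul_le_of_oscillation hqr hK hsupp ha.aestronglyMeasurable hnorm ?_ hFφ hφ
  rw [hsub]
  exact (hFa.sub (ha.const_mul c)).aestronglyMeasurable

end MeasureSpace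

section MetricSpace

variable {X : Type*} [MetricSpace X] [MeasurableSpace X] {μ : Measure X}

lemma bmoNorm_nonneg {q b : ℝ} {f : X → ℝ} : 0 ≤ bmoNorm μ q b f :=
  Real.sInf_nonneg fun _ hK => hK.1

lemma hardyNorm_nonneg {r : ℝ≥0∞} {b : ℝ} {f : X → ℝ} : 0 ≤ hardyNorm μ r b f :=
  Real.sInf_nonneg fun _ ⟨_, _, _, _, _, ht⟩ => ht ▸ tsum_nonneg fun _ => abs_nonneg _

lemma IsAtomOn.integrable {r : ℝ≥0∞} {b : ℝ} {a : X → ℝ} (ha : IsAtomOn μ r b a) :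
    Integrable a μ := by
  obtain ⟨-, -, -, -, -, h, -⟩ := ha
  exact h

lemma abs_integral_mul_atom_le {q r b K : ℝ} (hqr : q.HolderConjugate r) (hK : 0 ≤ K)
    {f a : X → ℝ} (hosc : OscBound μ q b f K) (ha : IsAtomOn μ (ENNReal.ofReal r) b a) :
    |∫ y, f y * a y ∂μ| ≤ K := by
  by_cases hfa : Integrable (fun y => f y * a y) μ
  · obtain ⟨x, s, hs, hsb, hsupp, haint, ha0, hnorm⟩ := ha
    exact abs_integral_mul_le_of_oscillation hqr hK hsupp haint ha0 hnorm hfa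
      (.of_forall fun _ _ => le_rfl) (hosc x s hs hsb)
  · rw [integral_undef hfa, abs_zero]
    exact hK

lemma inHardy_finsetSum {r : ℝ≥0∞} {b : ℝ} {n : ℕ} (hn : 0 < n) {lam : ℕ → ℝ}
    {a : ℕ → X → ℝ} (ha : ∀ j, j < n → IsAtomOn μ r b (a j)) :
    InHardy μ r b (fun x => ∑ j ∈ Finset.range n, lam j * a j x) := by
  refine ⟨fun k => if k < n then lam k else 0, fun k => a (min k (n - 1)),
    fun k => ha _ (by omega), summable_of_ne_finset_zero (s := Finset.range n) fun k hk => ?_,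
    tendsto_atTop_of_eventually_const (i₀ := n) fun N hN => ?_⟩
  · simp [Finset.mem_range.not.1 hk]
  · have hsum : ∀ x, ∑ k ∈ Finset.range N, (if k < n then lam k else 0) * a (min k (n - 1)) x
        = ∑ j ∈ Finset.range n, lam j * a j x := by
      intro x
      rw [← Finset.sum_subset (Finset.range_subset_range.2 hN) fun k _ hk => by
        simp [Finset.mem_range.not.1 hk]]
      refine Finset.sum_congr rfl fun k hk => ?_
      have hk := Finset.mem_range.1 hk
      rw [if_pos hk, min_eq_left (by omega)]
    simp only [hsum, sub_self, abs_zero, integral_zero]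

variable [BorelSpace X]

theorem abs_integral_mul_le_of_tendsto_sum_atoms {q r b K : ℝ} (hqr : q.HolderConjugate r)
    (hK : 0 ≤ K) {f g : X → ℝ} (hosc : OscBound μ q b f K) (hg : Integrable g μ)
    {c : ℕ → ℝ} {A : ℕ → X → ℝ} (hA : ∀ k, IsAtomOn μ (ENNReal.ofReal r) b (A k))
    (hc : Summable fun k => |c k|)
    (hlim : Tendsto (fun N => ∫ x, |g x - ∑ k ∈ Finset.range N, c k * A k x| ∂μ) atTop (𝓝 0)) :
    |∫ x, f x * g x ∂μ| ≤ K * ∑' k, |c k| := by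
  by_cases hfg : Integrable (fun x => f x * g x) μ
  swap
  · rw [integral_undef hfg, abs_zero]
    exact mul_nonneg hK (tsum_nonneg fun k => abs_nonneg _)
  choose x s hs hsb hsupp hAint hA0 hnorm using hA
  obtain ⟨W, hW, hgW, hfW⟩ := exists_measurableSet_aestronglyMeasurable_restrict_of_mul
    hfg.aestronglyMeasurable hg.aestronglyMeasurable
  -- `f` need not be measurable: we truncate it only on a measurable set `U` on which it is, and
  -- where `U` misses a ball of the decomposition, the mean of `f` over that ball is the junk `0`.
  obtain ⟨U, hU, hWU, hfU, hmean⟩ :=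
    exists_superset_aestronglyMeasurable_restrict hW hfW fun k => measurableSet_ball (x := x k)
  set h : ℕ → X → ℝ := fun m => U.indicator fun z => clamp m (f z)
  have hh : ∀ m, AEStronglyMeasurable (h m) μ := fun m =>
    (aestronglyMeasurable_indicator_iff hU).2 ((continuous_clamp m).comp_aestronglyMeasurable hfU)
  have hbdd : ∀ (m : ℕ) y, ‖h m y‖ ≤ m := fun m =>
    abs_indicator_clamp_le m.cast_nonneg U f
  have hbound : ∀ m : ℕ, |∫ y, h m y * g y ∂μ| ≤ K * ∑' k, |c k| := fun m =>
    abs_integral_mul_le_tsum (hh m) (hbdd m) hg hAint hc hlim fun k =>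
      abs_integral_mul_le_of_oscillation hqr hK (hsupp k) (hAint k) (hA0 k) (hnorm k)
        ((hAint k).bdd_mul (hh m) (.of_forall (hbdd m)))
        (.of_forall fun y hy => abs_indicator_clamp_sub_clamp_le m.cast_nonneg <|
          (hmean k).imp (· (not_imp_comm.1 (hsupp k y) hy)) id)
        (hosc _ _ (hs k) (hsb k))
  have hae : ∀ m : ℕ, (fun y => h m y * g y) =ᵐ[μ] fun y => clamp m (f y) * g y := by
    intro m
    filter_upwards [hgW] with y hy
    rcases eq_or_ne (g y) 0 with h0 | h0
    · simp [h0]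
    · rw [show h m y = clamp m (f y) from indicator_of_mem (hWU (hy h0)) _]
  refine le_of_tendsto (tendsto_integral_clamp_mul hfg fun m =>
    ((hh m).mul hg.aestronglyMeasurable).congr (hae m)).abs (.of_forall fun m => ?_)
  rw [← integral_congr_ae (hae m)]
  exact hbound m

end MetricSpace

theorem bmo_pairing_bound_general
    {M : Type*} [MetricSpace M] [MeasurableSpace M] [BorelSpace M]
    (μ : Measure M)
    (b₀ : ℝ)
    (r : ℝ) (hr : 1 < r)
    (f : M → ℝ) (hf : MemBMO μ (r / (r - 1)) b₀ f) :
    (∀ a : M → ℝ, IsAtomOn μ (ENNReal.ofReal r) b₀ a →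
        |∫ x, f x * a x ∂μ| ≤ bmoNorm μ (r / (r - 1)) b₀ f) ∧
    (∀ (n : ℕ) (lam : ℕ → ℝ) (a : ℕ → M → ℝ),
        (∀ j, j < n → IsAtomOn μ (ENNReal.ofReal r) b₀ (a j)) →
        |∫ x, f x * (∑ j ∈ Finset.range n, lam j * a j x) ∂μ|
          ≤ bmoNorm μ (r / (r - 1)) b₀ f *
              hardyNorm μ (ENNReal.ofReal r) b₀
                (fun x => ∑ j ∈ Finset.range n, lam j * a j x)) := by
  have hqr : (r / (r - 1)).HolderConjugate r := (Real.HolderConjugate.conjExponent hr).symm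
  obtain ⟨-, K₀, hK₀, hosc₀⟩ := hf
  have hS : {K | 0 ≤ K ∧ OscBound μ (r / (r - 1)) b₀ f K}.Nonempty := ⟨K₀, hK₀, hosc₀⟩
  refine ⟨fun a ha => le_csInf hS fun K ⟨hK, hosc⟩ => abs_integral_mul_atom_le hqr hK hosc ha,
    fun n lam a ha => ?_⟩
  rcases n.eq_zero_or_pos with rfl | hn
  · simpa using mul_nonneg bmoNorm_nonneg hardyNorm_nonneg
  obtain ⟨c, A, hA, hc, hlim⟩ := inHardy_finsetSum (lam := lam) hn ha
  refine le_csInf_mul_csInf hS ⟨_, c, A, hA, hc, hlim, rfl⟩ (fun K hK => hK.1) hardyNorm_nonneg ?_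
  rintro K ⟨hK, hosc⟩ t ⟨c, A, hA, hc, hlim, rfl⟩
  exact abs_integral_mul_le_of_tendsto_sum_atoms hqr hK hosc
    (integrable_finsetSum _ fun j hj => ((ha j (Finset.mem_range.1 hj)).integrable).const_mul _)
    hA hc hlim

/-- (Easy direction of `H¹`–`BMO` duality.)  For
`f ∈ BMO^{r'}(μ)` with `r ∈ (1,∞)`, `1/r + 1/r' = 1`, the functional
`g ↦ ∫ f·g dμ` on finite linear combinations of `(1,r)`-atoms is bounded by
`‖f‖_{BMO^{r'}}·‖g‖_{H^{1,r}}`; in particular `|∫ f·a dμ| ≤ ‖f‖_{BMO^{r'}}` for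
every `(1,r)`-atom `a`. -/
theorem bmo_pairing_bound
    {M : Type*} [MetricSpace M] [MeasurableSpace M] [BorelSpace M]
    (μ : Measure M)
    (hballs : ∀ (x : M) (r : ℝ), μ (Metric.ball x r) < ⊤)
    (b₀ : ℝ) (hb₀ : 0 < b₀)
    (r : ℝ) (hr : 1 < r)
    (f : M → ℝ) (hf : MemBMO μ (r / (r - 1)) b₀ f) :
    (∀ a : M → ℝ, IsAtomOn μ (ENNReal.ofReal r) b₀ a →
        |∫ x, f x * a x ∂μ| ≤ bmoNorm μ (r / (r - 1)) b₀ f) ∧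
    (∀ (n : ℕ) (lam : ℕ → ℝ) (a : ℕ → M → ℝ),
        (∀ j, j < n → IsAtomOn μ (ENNReal.ofReal r) b₀ (a j)) →
        |∫ x, f x * (∑ j ∈ Finset.range n, lam j * a j x) ∂μ|
          ≤ bmoNorm μ (r / (r - 1)) b₀ f *
              hardyNorm μ (ENNReal.ofReal r) b₀
                (fun x => ∑ j ∈ Finset.range n, lam j * a j x)) :=
  bmo_pairing_bound_general μ b₀ r hr f hf
end
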